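/- Let v be a real analytic function on 𝕋^b satisfying the non-degeneracy condition, with Łojasiewicz constants C(v), a(v) > 0 (so that sup_{j, x_j^¬} mes({x : |v(x)-E| < δ}(x_j^¬)) ≤ C(v) δ^{a(v)} for all E ∈ ℝ, δ > 0). For E ∈ ℝ, δ > 0 let X = {x ∈ 𝕋^b : |v(x) - E| < δ} and X_N = ⋃_{|n|≤N} {x ∈ 𝕋^b : x + nω mod ℤ^b ∈ X}. Then: (1) sup_{1≤j≤d, x_j^¬ ∈ 𝕋^{b-b_j}} mes(X_N(x_j^¬)) ≤ C(v)(2N+1)^d δ^{a(v)}. (2) Moreover, if λ ≥ 2δ^{-1}(2N+1)^d and N ≥ N(ρ,d), then for any x ∉ X_N, any ω ∈ 𝕋^b and any Q_N ∈ 𝓔_N^0, the Green's function G_{Q_N}(E;x) exists and satisfies ‖G_{Q_N}(E;x)‖ ≤ 2δ^{-1} and |G_{Q_N}(E;x)(n,n')| ≤ 2δ^{-1} e^{-ρ|n-n'|} for all n,n' ∈ Q_N. -/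

import Mathlib

open MeasureTheory Real Set ENNReal

namespace QPLoc

inductive SignCond : Type
  | ge | le | eq

def SignCond.holds : SignCond → ℝ → Prop
  | .ge, t => 0 ≤ t
  | .le, t => t ≤ 0
  | .eq, t => t = 0

/-- `S` is a semi-algebraic subset of `ℝ^ι` of degree at most `D`. -/
def SemiAlgebraic {ι : Type} [Fintype ι] (S : Set (ι → ℝ)) (D : ℝ) : Prop :=
  ∃ (s k : ℕ) (P : Fin s → MvPolynomial ι ℝ) (J : ℕ)
    (L : Fin J → Finset (Fin s)) (sg : Fin J → Fin s → SignCond),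
    ((s : ℝ) * (k : ℝ) ≤ D) ∧ (∀ i, (P i).totalDegree ≤ k) ∧
    S = ⋃ j : Fin J, ⋂ l ∈ L j, {x : ι → ℝ | (sg j l).holds (MvPolynomial.eval x (P l))}

def cube (ι : Type) : Set (ι → ℝ) := {x | ∀ i, x i ∈ Set.Icc (0 : ℝ) 1}

def zNorm {d : ℕ} (n : Fin d → ℤ) : ℕ := Finset.univ.sup fun i => (n i).natAbs

def shift {b d : ℕ} (β : Fin b → Fin d) (ω : Fin b → ℝ) (k : Fin d → ℤ) (x : Fin b → ℝ) :
    Fin b → ℝ := fun t => x t + (k (β t) : ℝ) * ω t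

noncomputable def torusProj {b : ℕ} (x : Fin b → ℝ) : Fin b → ℝ := fun t => Int.fract (x t)

def btilde {b d : ℕ} (β : Fin b → Fin d) : ℕ :=
  Finset.univ.sup fun j : Fin d => (Finset.univ.filter fun t => β t = j).card

noncomputable def opNorm {𝕜 : Type} [RCLike 𝕜] {ι : Type} [Fintype ι] [DecidableEq ι]
    (A : Matrix ι ι 𝕜) : ℝ :=
  ‖LinearMap.toContinuousLinearMap (Matrix.toEuclideanLin A)‖

noncomputable def hamR {b d : ℕ} (β : Fin b → Fin d)
    (S : (Fin d → ℤ) → (Fin d → ℤ) → ℝ) (lam : ℝ) (v : (Fin b → ℝ) → ℝ)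
    (ω x : Fin b → ℝ) (E : ℝ) (Λ : Finset (Fin d → ℤ)) : Matrix Λ Λ ℝ :=
  Matrix.of fun n n' => lam⁻¹ * S n.1 n'.1 + (if n = n' then v (shift β ω n.1 x) - E else 0)

noncomputable def green {b d : ℕ} (β : Fin b → Fin d)
    (S : (Fin d → ℤ) → (Fin d → ℤ) → ℝ) (lam : ℝ) (v : (Fin b → ℝ) → ℝ)
    (ω x : Fin b → ℝ) (E : ℝ) (Λ : Finset (Fin d → ℤ)) : Matrix Λ Λ ℝ :=
  (hamR β S lam v ω x E Λ)⁻¹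

def box (d N : ℕ) : Set (Fin d → ℤ) := {n | ∀ i, |n i| ≤ (N : ℤ)}

def corner {d : ℕ} (ς : Fin d → Option Bool) : Set (Fin d → ℤ) :=
  {n | ∀ i, match ς i with
    | none => True
    | some true => 0 < n i
    | some false => n i < 0}

/-- elementary region of size `N` centered at `0`. -/
def IsER0 (d N : ℕ) (Q : Set (Fin d → ℤ)) : Prop :=
  Q = box d N ∨ ∃ ς : Fin d → Option Bool,
    2 ≤ (Finset.univ.filter fun i => (ς i).isSome).card ∧ Q = box d N \ corner ς

/-- translate of an elementary region of size `N`. -/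
def IsER (d N : ℕ) (Q : Set (Fin d → ℤ)) : Prop :=
  ∃ (c : Fin d → ℤ) (Q₀ : Set (Fin d → ℤ)), IsER0 d N Q₀ ∧ Q = (fun n => c + n) '' Q₀

/-- `(E, x)` is `(ρ', N)`-good. -/
def Good {b d : ℕ} (β : Fin b → Fin d) (S : (Fin d → ℤ) → (Fin d → ℤ) → ℝ)
    (lam : ℝ) (v : (Fin b → ℝ) → ℝ) (ω : Fin b → ℝ) (ρ' : ℝ) (N : ℕ) (E : ℝ)
    (x : Fin b → ℝ) : Prop :=
  ∀ Λ : Finset (Fin d → ℤ), IsER0 d N (↑Λ : Set (Fin d → ℤ)) →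
    IsUnit (hamR β S lam v ω x E Λ) ∧
    opNorm (green β S lam v ω x E Λ) ≤ Real.exp (Real.sqrt (N : ℝ)) ∧
    ∀ n n' : Λ, (N : ℝ) / 10 ≤ (zNorm (n.1 - n'.1) : ℝ) →
      |green β S lam v ω x E Λ n n'| ≤ Real.exp (-ρ' * (zNorm (n.1 - n'.1) : ℝ))

/-- Lebesgue measure of the section of `X ⊆ 𝕋^b` in the `j`-th block of variables,
the remaining variables being fixed at `x`. -/
def blockIdx {b d : ℕ} (β : Fin b → Fin d) (j : Fin d) : Type := {t : Fin b // β t = j}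

instance {b d : ℕ} (β : Fin b → Fin d) (j : Fin d) : Fintype (blockIdx β j) :=
  Subtype.fintype _

noncomputable def sectMeasure {b d : ℕ} (β : Fin b → Fin d) (X : Set (Fin b → ℝ))
    (j : Fin d) (x : Fin b → ℝ) : ℝ≥0∞ :=
  volume {θ : blockIdx β j → ℝ |
    (∀ s, θ s ∈ Set.Icc (0 : ℝ) 1) ∧ (fun t => if h : β t = j then θ ⟨t, h⟩ else x t) ∈ X}

/-- the Green's functions satisfy property P with parameters `(γ, ρ')` at size `N`,
with semialgebraic frequency set `Ω` and exceptional sets `X ω E`. -/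
def PropertyPWith {b d : ℕ} (β : Fin b → Fin d) (S : (Fin d → ℤ) → (Fin d → ℤ) → ℝ)
    (lam : ℝ) (v : (Fin b → ℝ) → ℝ) (γ ρ' : ℝ) (N : ℕ)
    (Ω : Set (Fin b → ℝ)) (X : (Fin b → ℝ) → ℝ → Set (Fin b → ℝ)) : Prop :=
  Ω ⊆ cube (Fin b) ∧ SemiAlgebraic Ω ((N : ℝ) ^ (4 * d)) ∧
  ∀ ω ∈ Ω, ∀ E : ℝ,
    (∀ (j : Fin d) (x : Fin b → ℝ),
      sectMeasure β (X ω E) j x ≤ ENNReal.ofReal (Real.exp (-((N : ℝ) ^ γ)))) ∧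
    ∀ x : Fin b → ℝ, x ∉ X ω E → Good β S lam v ω ρ' N E x

/-- Anderson localization for the operator on `ℓ²(ℤ^d)` with matrix `Hmat`:
pure point spectrum (a complete system of eigenfunctions) with exponentially
decaying eigenfunctions. -/
def ALocalized {d : ℕ} (Hmat : (Fin d → ℤ) → (Fin d → ℤ) → ℝ) : Prop :=
  ∃ (ψ : ℕ → (Fin d → ℤ) → ℝ) (Ev : ℕ → ℝ),
    (∀ k, ψ k ≠ 0) ∧
    (∀ k, Summable fun n => (ψ k n) ^ 2) ∧
    (∀ k, ∃ C > (0:ℝ), ∃ c > (0:ℝ), ∀ n, |ψ k n| ≤ C * Real.exp (-c * (zNorm n : ℝ))) ∧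
    (∀ k n, ∑' n', Hmat n n' * ψ k n' = Ev k * ψ k n) ∧
    (∀ f : (Fin d → ℤ) → ℝ, (Summable fun n => (f n) ^ 2) →
      (∀ k, ∑' n, f n * ψ k n = 0) → f = 0)

end QPLoc

/-!
(1) For a fixed `n`, the map `θ ↦ fract (θ + n_j ω^j)` preserves Lebesgue measure on the unit
cube, so the section of `{x | x + nω ∈ X mod 1}` at `x_j^¬` has the measure of a section of `X`
at another point, at most `C δ^a`; there are `(2N+1)^d` lattice points with `|n| ≤ N`.

(2) Off `X_N` the diagonal `D(n) = v(x + nω) - E` of `λ⁻¹H - E` on `Q_N` satisfies `|D(n)| ≥ δ`,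
while the entries of `K = λ⁻¹S` are at most `λ⁻¹ e^{-ρ|n-n'|}`, so `‖K‖ ≤ |Q_N| λ⁻¹ ≤ δ/2` and a
Neumann series around `D` gives `‖G‖ ≤ 2δ⁻¹`. For the entries, `G = D⁻¹(1 - KG)` evaluated where
`|G(n,n')| e^{ρ|n-n'|}` attains its maximum `M` gives `M ≤ δ⁻¹ + M/2`, by the triangle
inequality for `|·|`.
-/

theorem isUnit_add_and_norm_inverse_le {R : Type*} [NormedRing R] [CompleteSpace R]
    (u : Rˣ) {k : R} (hk : ‖(↑u⁻¹ : R)‖ * ‖k‖ ≤ 1 / 2) :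
    IsUnit ((u : R) + k) ∧ ‖Ring.inverse ((u : R) + k)‖ ≤ 2 * ‖(↑u⁻¹ : R)‖ := by
  have hsmall : ‖-(↑u⁻¹ * k)‖ < 1 := by
    rw [norm_neg]; exact (norm_mul_le _ _).trans_lt (by linarith)
  have hfactor : (u : R) + k = u * (1 - -(↑u⁻¹ * k)) := by
    rw [sub_neg_eq_add, mul_add, mul_one, ← mul_assoc, Units.mul_inv, one_mul]
  have hunit : IsUnit ((u : R) + k) := by
    rw [hfactor]; exact u.isUnit.mul (Units.oneSub _ hsmall).isUnit
  refine ⟨hunit, ?_⟩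
  set g := Ring.inverse ((u : R) + k)
  have hg : g = ↑u⁻¹ - ↑u⁻¹ * k * g := by
    have h := congrArg ((↑u⁻¹ : R) * ·) (Ring.mul_inverse_cancel _ hunit)
    simp only [mul_add, add_mul, mul_one, ← mul_assoc, Units.inv_mul, one_mul] at h
    exact eq_sub_of_add_eq h
  have : ‖g‖ ≤ ‖(↑u⁻¹ : R)‖ + ‖g‖ / 2 :=
    calc ‖g‖ = ‖↑u⁻¹ - ↑u⁻¹ * k * g‖ := congrArg _ hg
      _ ≤ ‖(↑u⁻¹ : R)‖ + ‖(↑u⁻¹ : R)‖ * ‖k‖ * ‖g‖ :=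
          (norm_sub_le _ _).trans (by gcongr; exact norm_mul₃_le)
      _ ≤ ‖(↑u⁻¹ : R)‖ + ‖g‖ / 2 := by nlinarith [norm_nonneg g]
  linarith

namespace Matrix
variable {ι : Type*}

theorem abs_one_apply_le_exp [DecidableEq ι] [PseudoMetricSpace ι] (ρ : ℝ) (i j : ι) :
    |(1 : Matrix ι ι ℝ) i j| ≤ exp (-ρ * dist i j) := by
  rcases eq_or_ne i j with rfl | hij
  · simp
  · simp [one_apply_ne hij, (exp_pos _).le]

variable [Fintype ι]

theorem abs_mul_apply_le_of_decay [PseudoMetricSpace ι] {ρ : ℝ} (hρ : 0 ≤ ρ)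
    {A B : Matrix ι ι ℝ} {a b : ℝ}
    (hA : ∀ i j, |A i j| ≤ a * exp (-ρ * dist i j))
    (hB : ∀ i j, |B i j| ≤ b * exp (-ρ * dist i j)) (i j : ι) :
    |(A * B) i j| ≤ Fintype.card ι * a * b * exp (-ρ * dist i j) :=
  calc |(A * B) i j| ≤ ∑ k, |A i k| * |B k j| := by
        rw [mul_apply]; exact (Finset.abs_sum_le_sum_abs _ _).trans_eq (by simp [abs_mul])
    _ ≤ ∑ _k : ι, a * b * exp (-ρ * dist i j) := Finset.sum_le_sum fun k _ => by
        have ha : 0 ≤ a := nonneg_of_mul_nonneg_left ((abs_nonneg _).trans (hA i k)) (exp_pos _)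
        have hb : 0 ≤ b := nonneg_of_mul_nonneg_left ((abs_nonneg _).trans (hB k j)) (exp_pos _)
        calc |A i k| * |B k j| ≤ (a * exp (-ρ * dist i k)) * (b * exp (-ρ * dist k j)) :=
              mul_le_mul (hA i k) (hB k j) (abs_nonneg _) (by positivity)
          _ = a * b * exp (-ρ * (dist i k + dist k j)) := by rw [mul_add, exp_add]; ring
          _ ≤ a * b * exp (-ρ * dist i j) := by
              have := mul_le_mul_of_nonpos_left (dist_triangle i k j) (neg_nonpos.2 hρ)
              gcongr
    _ = Fintype.card ι * a * b * exp (-ρ * dist i j) := by simp; ring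

variable [DecidableEq ι]
open scoped Matrix.Norms.L2Operator

theorem l2_opNorm_le_card_mul {K : Matrix ι ι ℝ} {ε : ℝ} (hε : 0 ≤ ε)
    (hK : ∀ i j, |K i j| ≤ ε) : ‖K‖ ≤ Fintype.card ι * ε := by
  rw [cstar_norm_def]
  refine ContinuousLinearMap.opNorm_le_bound _ (by positivity) fun x => ?_
  have hrow : ∀ i, |(K *ᵥ x.ofLp) i| ≤ ε * ∑ j, |x.ofLp j| := fun i =>
    calc |(K *ᵥ x.ofLp) i| ≤ ∑ j, |K i j * x.ofLp j| := Finset.abs_sum_le_sum_abs _ _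
      _ ≤ ∑ j, ε * |x.ofLp j| := by gcongr with j; rw [abs_mul]; gcongr; exact hK i j
      _ = ε * ∑ j, |x.ofLp j| := (Finset.mul_sum _ _ _).symm
  have hl1 : (∑ j, |x.ofLp j|) ^ 2 ≤ Fintype.card ι * ‖x‖ ^ 2 := by
    rw [EuclideanSpace.norm_sq_eq]
    simpa using sq_sum_le_card_mul_sum_sq (s := Finset.univ) (f := fun j => |x.ofLp j|)
  refine le_of_sq_le_sq ?_ (by positivity)
  rw [EuclideanSpace.norm_sq_eq]
  calc _ ≤ ∑ _i : ι, (ε * ∑ j, |x.ofLp j|) ^ 2 := by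
        gcongr with i; rw [ofLp_toEuclideanCLM, Real.norm_eq_abs]; exact hrow i
    _ = Fintype.card ι * ε ^ 2 * (∑ j, |x.ofLp j|) ^ 2 := by simp; ring
    _ ≤ Fintype.card ι * ε ^ 2 * (Fintype.card ι * ‖x‖ ^ 2) := by gcongr
    _ = (Fintype.card ι * ε * ‖x‖) ^ 2 := by ring

noncomputable def diagonalUnit {D : ι → ℝ} (hD : ∀ i, D i ≠ 0) : (Matrix ι ι ℝ)ˣ where
  val := diagonal D
  inv := diagonal D⁻¹
  val_inv := by
    rw [diagonal_mul_diagonal, ← diagonal_one]; congr; funext i; exact mul_inv_cancel₀ (hD i)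
  inv_val := by
    rw [diagonal_mul_diagonal, ← diagonal_one]; congr; funext i; exact inv_mul_cancel₀ (hD i)

theorem isUnit_and_norm_inv_le_of_diagDominant {D : ι → ℝ} {K : Matrix ι ι ℝ} {δ ε : ℝ}
    (hδ : 0 < δ) (hε : 0 ≤ ε) (hD : ∀ i, δ ≤ |D i|) (hK : ∀ i j, |K i j| ≤ ε)
    (hcard : Fintype.card ι * ε ≤ δ / 2) :
    IsUnit (K + diagonal D) ∧ ‖(K + diagonal D)⁻¹‖ ≤ 2 * δ⁻¹ := by
  set u := diagonalUnit fun i => (abs_pos.1 (hδ.trans_le (hD i)))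
  have hu : ‖(↑u⁻¹ : Matrix ι ι ℝ)‖ ≤ δ⁻¹ := by
    change ‖diagonal D⁻¹‖ ≤ δ⁻¹
    rw [l2_opNorm_diagonal, pi_norm_le_iff_of_nonneg (by positivity)]
    intro i
    rw [Pi.inv_apply, norm_inv, Real.norm_eq_abs]
    exact inv_anti₀ hδ (hD i)
  have hsmall : ‖(↑u⁻¹ : Matrix ι ι ℝ)‖ * ‖K‖ ≤ 1 / 2 :=
    calc _ ≤ δ⁻¹ * (δ / 2) := by
          gcongr; exact (l2_opNorm_le_card_mul hε hK).trans hcard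
      _ = 1 / 2 := by field_simp
  obtain ⟨hunit, hnorm⟩ := isUnit_add_and_norm_inverse_le u hsmall
  rw [add_comm K, nonsing_inv_eq_ringInverse]
  exact ⟨hunit, hnorm.trans (by linarith)⟩

theorem diagonal_mul_inv_apply {D : ι → ℝ} {K : Matrix ι ι ℝ} (hunit : IsUnit (K + diagonal D))
    (i j : ι) :
    D i * (K + diagonal D)⁻¹ i j = (1 : Matrix ι ι ℝ) i j - (K * (K + diagonal D)⁻¹) i j := by
  have h := congrFun₂ (mul_nonsing_inv _ ((isUnit_iff_isUnit_det _).1 hunit)) i j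
  rw [add_mul, add_apply, diagonal_mul] at h
  linarith

theorem abs_inv_apply_le_of_diagDominant [PseudoMetricSpace ι] {ρ : ℝ} {D : ι → ℝ}
    {K : Matrix ι ι ℝ} {δ ε : ℝ} (hδ : 0 < δ) (hρ : 0 ≤ ρ) (hD : ∀ i, δ ≤ |D i|)
    (hK : ∀ i j, |K i j| ≤ ε * exp (-ρ * dist i j)) (hcard : Fintype.card ι * ε ≤ δ / 2)
    (hunit : IsUnit (K + diagonal D)) (i j : ι) :
    |(K + diagonal D)⁻¹ i j| ≤ 2 * δ⁻¹ * exp (-ρ * dist i j) := by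
  set G := (K + diagonal D)⁻¹
  have : Nonempty ι := ⟨i⟩
  obtain ⟨⟨i₀, j₀⟩, hmax⟩ :=
    Finite.exists_max fun p : ι × ι => |G p.1 p.2| * exp (ρ * dist p.1 p.2)
  set M := |G i₀ j₀| * exp (ρ * dist i₀ j₀)
  have hGM : ∀ i j, |G i j| ≤ M * exp (-ρ * dist i j) := fun i j =>
    calc |G i j| = |G i j| * exp (ρ * dist i j) * exp (-ρ * dist i j) := by
          rw [mul_assoc, ← exp_add]; simp
      _ ≤ M * exp (-ρ * dist i j) := by gcongr; exact hmax (i, j)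
  have hM : δ * M ≤ 1 + δ / 2 * M := by
    have hKG := abs_mul_apply_le_of_decay hρ hK hGM i₀ j₀
    have hone := abs_one_apply_le_exp ρ i₀ j₀
    have hcardM := mul_le_mul_of_nonneg_right hcard
      (by positivity : 0 ≤ M * exp (-ρ * dist i₀ j₀))
    have h : δ * |G i₀ j₀| ≤ (1 + δ / 2 * M) * exp (-ρ * dist i₀ j₀) :=
      calc δ * |G i₀ j₀| ≤ |D i₀ * G i₀ j₀| := by rw [abs_mul]; gcongr; exact hD i₀
        _ ≤ |(1 : Matrix ι ι ℝ) i₀ j₀| + |(K * G) i₀ j₀| := by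
            rw [diagonal_mul_inv_apply hunit]; exact abs_sub _ _
        _ ≤ (1 + δ / 2 * M) * exp (-ρ * dist i₀ j₀) := by linarith
    calc δ * M = δ * |G i₀ j₀| * exp (ρ * dist i₀ j₀) := by ring
      _ ≤ (1 + δ / 2 * M) * exp (-ρ * dist i₀ j₀) * exp (ρ * dist i₀ j₀) := by gcongr
      _ = 1 + δ / 2 * M := by rw [mul_assoc, ← exp_add]; simp
  calc |G i j| ≤ M * exp (-ρ * dist i j) := hGM i j
    _ ≤ 2 * δ⁻¹ * exp (-ρ * dist i j) := by
        gcongr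
        rw [← div_eq_mul_inv, le_div_iff₀ hδ]
        linarith

end Matrix

theorem map_fract_volume_restrict_Ico (t : ℝ) :
    (volume.restrict (Ico t (t + 1))).map Int.fract = volume.restrict (Ico 0 1) := by
  -- every period interval pushes forward to Haar measure on `ℝ / ℤ`
  have hcircle : ∀ s : ℝ, (volume.restrict (Ico s (s + 1))).map Int.fract =
      (volume : Measure UnitAddCircle).map fun z => (AddCircle.equivIco 1 0 z : ℝ) := by
    intro s
    have hmk : MeasurePreserving ((↑) : ℝ → UnitAddCircle) (volume.restrict (Ico s (s + 1))) := by
      rw [Measure.restrict_congr_set Ico_ae_eq_Ioc]; exact UnitAddCircle.measurePreserving_mk s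
    have hIco : Measurable fun z : UnitAddCircle => (AddCircle.equivIco 1 0 z : ℝ) :=
      measurable_subtype_coe.comp (AddCircle.measurableEquivIco 1 0).measurable
    rw [← hmk.map_eq, Measure.map_map hIco hmk.measurable]
    congr 1
    funext x
    simp [AddCircle.coe_equivIco_mk_apply]
  rw [hcircle t, ← hcircle 0, zero_add]
  conv_rhs => rw [← Measure.map_id (μ := volume.restrict (Ico (0 : ℝ) 1))]
  exact Measure.map_congr
    (ae_restrict_of_forall_mem measurableSet_Ico fun x hx => Int.fract_eq_self.2 hx)

theorem measurePreserving_fract_add (c : ℝ) :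
    MeasurePreserving (fun θ => Int.fract (θ + c))
      (volume.restrict (Ico 0 1)) (volume.restrict (Ico 0 1)) := by
  have hadd : MeasurePreserving (· + c) (volume.restrict (Ico 0 1))
      (volume.restrict (Ico c (c + 1))) := by
    convert (measurePreserving_add_right volume c).restrict_preimage measurableSet_Ico using 2
    rw [preimage_add_const_Ico, sub_self, add_sub_cancel_left]
  refine ⟨measurable_fract.comp (measurable_add_const c), ?_⟩
  change (volume.restrict (Ico 0 1)).map (Int.fract ∘ (· + c)) = _
  rw [← Measure.map_map measurable_fract (measurable_add_const c), hadd.map_eq,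
    map_fract_volume_restrict_Ico]

theorem volume_unitCube_inter_fract_add_preimage {ι : Type*} [Fintype ι] (c : ι → ℝ)
    {A : Set (ι → ℝ)} (hA : MeasurableSet A) :
    volume {θ : ι → ℝ | (∀ s, θ s ∈ Icc 0 1) ∧ (fun s => Int.fract (θ s + c s)) ∈ A} =
      volume {θ : ι → ℝ | (∀ s, θ s ∈ Icc 0 1) ∧ θ ∈ A} := by
  have hcube : ∀ B : Set (ι → ℝ), volume {θ : ι → ℝ | (∀ s, θ s ∈ Icc 0 1) ∧ θ ∈ B} =
      Measure.pi (fun _ => volume.restrict (Ico (0 : ℝ) 1)) B := by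
    intro B
    rw [← Measure.restrict_pi_pi, Measure.restrict_congr_set Measure.univ_pi_Ico_ae_eq_Icc,
      ← volume_pi, Measure.restrict_apply' measurableSet_Icc]
    congr 1
    ext θ
    simp only [mem_ofPred_eq, mem_inter_iff, mem_Icc, Pi.le_def, forall_and]
    tauto
  have hT := measurePreserving_pi _ _ fun s => measurePreserving_fract_add (c s)
  rw [hcube A, ← hT.measure_preimage hA.nullMeasurableSet]
  exact hcube _

namespace QPLoc

theorem zNorm_le_iff_mem_box {d N : ℕ} {n : Fin d → ℤ} : zNorm n ≤ N ↔ n ∈ box d N := by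
  simp only [zNorm, Finset.sup_le_iff, Finset.mem_univ, true_implies, box, mem_ofPred_eq,
    Int.abs_eq_natAbs]
  exact forall_congr' fun i => by omega

theorem zNorm_sub_eq_dist {d : ℕ} (n m : Fin d → ℤ) : (zNorm (n - m) : ℝ) = dist n m := by
  rw [dist_pi_def, zNorm, ← NNReal.coe_natCast,
    Finset.apply_sup_eq_sup_comp_of_linearOrder _ Nat.mono_cast Nat.cast_zero]
  congr 2
  funext i
  ext
  simp [Int.dist_eq, Nat.cast_natAbs]

noncomputable def boxFinset (d N : ℕ) : Finset (Fin d → ℤ) :=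
  Fintype.piFinset fun _ => Finset.Icc (-(N : ℤ)) N

theorem coe_boxFinset (d N : ℕ) : (boxFinset d N : Set (Fin d → ℤ)) = box d N := by
  ext n
  simp [boxFinset, box, abs_le, Pi.le_def, forall_and]

theorem card_boxFinset (d N : ℕ) : (boxFinset d N).card = (2 * N + 1) ^ d := by
  rw [boxFinset, Fintype.card_piFinset, Finset.prod_const, Finset.card_univ, Fintype.card_fin,
    Int.card_Icc]
  congr 1
  omega

theorem IsER0.subset_box {d N : ℕ} {Q : Set (Fin d → ℤ)} (h : IsER0 d N Q) : Q ⊆ box d N := by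
  rcases h with rfl | ⟨ς, -, rfl⟩
  exacts [subset_rfl, sdiff_subset]

theorem IsER0.card_le {d N : ℕ} {Λ : Finset (Fin d → ℤ)} (h : IsER0 d N Λ) :
    Λ.card ≤ (2 * N + 1) ^ d := by
  rw [← card_boxFinset]
  exact Finset.card_le_card (by rw [← Finset.coe_subset, coe_boxFinset]; exact h.subset_box)

theorem apply_torusProj_of_periodic {b : ℕ} {v : (Fin b → ℝ) → ℝ}
    (hv : ∀ (x : Fin b → ℝ) (m : Fin b → ℤ), v (fun t => x t + (m t : ℝ)) = v x)
    (y : Fin b → ℝ) : v (torusProj y) = v y := by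
  rw [← hv (torusProj y) fun t => ⌊y t⌋]
  simp only [torusProj, Int.fract_add_floor]

section Sections
variable {b d : ℕ} (β : Fin b → Fin d) (j : Fin d)

def blockUpdate (θ : blockIdx β j → ℝ) (x : Fin b → ℝ) : Fin b → ℝ :=
  fun t => if h : β t = j then θ ⟨t, h⟩ else x t

theorem sectMeasure_eq (X : Set (Fin b → ℝ)) (x : Fin b → ℝ) :
    sectMeasure β X j x =
      volume {θ : blockIdx β j → ℝ | (∀ s, θ s ∈ Icc 0 1) ∧ blockUpdate β j θ x ∈ X} :=
  rfl

theorem continuous_blockUpdate (x : Fin b → ℝ) : Continuous fun θ => blockUpdate β j θ x := by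
  refine continuous_pi fun t => ?_
  by_cases h : β t = j
  · simp only [blockUpdate, dif_pos h]; exact continuous_apply _
  · simp only [blockUpdate, dif_neg h]; exact continuous_const

theorem torusProj_shift_blockUpdate (ω : Fin b → ℝ) (n : Fin d → ℤ) (θ : blockIdx β j → ℝ)
    (x : Fin b → ℝ) :
    torusProj (shift β ω n (blockUpdate β j θ x)) =
      blockUpdate β j (fun s => Int.fract (θ s + n j * ω s.1)) (torusProj (shift β ω n x)) := by
  funext t
  by_cases h : β t = j
  · subst h; simp [torusProj, shift, blockUpdate]
  · simp [torusProj, shift, blockUpdate, h]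

theorem sectMeasure_preimage_torusProj_shift {X : Set (Fin b → ℝ)} (hX : MeasurableSet X)
    (ω : Fin b → ℝ) (n : Fin d → ℤ) (x : Fin b → ℝ) :
    sectMeasure β ((fun y => torusProj (shift β ω n y)) ⁻¹' X) j x =
      sectMeasure β X j (torusProj (shift β ω n x)) := by
  simp only [sectMeasure_eq, mem_preimage, torusProj_shift_blockUpdate]
  exact volume_unitCube_inter_fract_add_preimage _ ((continuous_blockUpdate β j _).measurable hX)

theorem sectMeasure_biUnion_le {α : Type*} (F : Finset α) (X : α → Set (Fin b → ℝ))
    (x : Fin b → ℝ) : sectMeasure β (⋃ n ∈ F, X n) j x ≤ ∑ n ∈ F, sectMeasure β (X n) j x := by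
  simp only [sectMeasure_eq]
  refine (measure_mono fun θ => ?_).trans (measure_biUnion_finset_le F _)
  simp only [mem_ofPred_eq, mem_iUnion]
  exact fun ⟨hθ, n, hn, hX⟩ => ⟨n, hn, hθ, hX⟩

theorem sectMeasure_orbit_le {X : Set (Fin b → ℝ)} (hX : MeasurableSet X) {m : ℝ≥0∞}
    (hm : ∀ x, sectMeasure β X j x ≤ m) (ω : Fin b → ℝ) (N : ℕ) (x : Fin b → ℝ) :
    sectMeasure β {y | ∃ n, zNorm n ≤ N ∧ torusProj (shift β ω n y) ∈ X} j x ≤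
      (2 * N + 1) ^ d * m := by
  have horbit : {y | ∃ n, zNorm n ≤ N ∧ torusProj (shift β ω n y) ∈ X} =
      ⋃ n ∈ boxFinset d N, (fun y => torusProj (shift β ω n y)) ⁻¹' X := by
    ext y
    simp [← Finset.mem_coe, coe_boxFinset, zNorm_le_iff_mem_box]
  calc _ ≤ ∑ n ∈ boxFinset d N, sectMeasure β ((fun y => torusProj (shift β ω n y)) ⁻¹' X) j x :=
        horbit ▸ sectMeasure_biUnion_le β j _ _ x
    _ ≤ ∑ _n ∈ boxFinset d N, m := by
        gcongr with n
        rw [sectMeasure_preimage_torusProj_shift β j hX]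
        exact hm _
    _ = (2 * N + 1) ^ d * m := by simp [card_boxFinset]

end Sections

theorem green_bounds_of_diagonal_ge {b d : ℕ} {β : Fin b → Fin d}
    {S : (Fin d → ℤ) → (Fin d → ℤ) → ℝ} {ρ : ℝ} (hρ : 0 ≤ ρ)
    (hS : ∀ n n' : Fin d → ℤ, |S n n'| ≤ exp (-ρ * (zNorm (n - n') : ℝ)))
    {lam : ℝ} (hlam : 0 < lam) {v : (Fin b → ℝ) → ℝ} {ω x : Fin b → ℝ} {E δ : ℝ} (hδ : 0 < δ)
    {Λ : Finset (Fin d → ℤ)} (hD : ∀ n ∈ Λ, δ ≤ |v (shift β ω n x) - E|)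
    (hcard : Λ.card * lam⁻¹ ≤ δ / 2) :
    IsUnit (hamR β S lam v ω x E Λ) ∧
    opNorm (green β S lam v ω x E Λ) ≤ 2 * δ⁻¹ ∧
    ∀ n n' : Λ, |green β S lam v ω x E Λ n n'| ≤
      2 * δ⁻¹ * exp (-ρ * (zNorm (n.1 - n'.1) : ℝ)) := by
  set K : Matrix Λ Λ ℝ := Matrix.of fun n n' => lam⁻¹ * S n.1 n'.1
  have hH : hamR β S lam v ω x E Λ = K + Matrix.diagonal fun n => v (shift β ω n.1 x) - E := by
    ext n n'
    simp [hamR, K, Matrix.diagonal_apply]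
  have hK : ∀ n n' : Λ, |K n n'| ≤ lam⁻¹ * exp (-ρ * dist n n') := fun n n' => by
    rw [show K n n' = lam⁻¹ * S n n' from rfl, abs_mul, abs_inv, abs_of_pos hlam,
      Subtype.dist_eq, ← zNorm_sub_eq_dist]
    gcongr
    exact hS _ _
  have hKε : ∀ n n' : Λ, |K n n'| ≤ lam⁻¹ := fun n n' =>
    (hK n n').trans (mul_le_of_le_one_right (by positivity)
      (exp_le_one_iff.2 (by nlinarith [dist_nonneg (x := n) (y := n')])))
  rw [← Fintype.card_coe] at hcard
  obtain ⟨hunit, hnorm⟩ := Matrix.isUnit_and_norm_inv_le_of_diagDominant hδ (by positivity)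
    (fun n : Λ => hD n.1 n.2) hKε hcard
  refine ⟨hH ▸ hunit, by rw [green, hH]; exact hnorm, fun n n' => ?_⟩
  rw [green, hH, zNorm_sub_eq_dist]
  exact Matrix.abs_inv_apply_le_of_diagDominant hδ hρ (fun n : Λ => hD n.1 n.2) hK hcard hunit n n'

theorem initial_scale_estimate_general (d : ℕ) (ρ : ℝ) (hρ : 0 < ρ) :
    ∃ N₀ : ℕ, ∀ (b : ℕ), 0 < b →
    ∀ β : Fin b → Fin d, Function.Surjective β →
    ∀ S : (Fin d → ℤ) → (Fin d → ℤ) → ℝ,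
      (∀ n n' m : Fin d → ℤ, S (n + m) (n' + m) = S n n') →
      (∀ n n' : Fin d → ℤ, S n n' = S n' n) →
      (∀ n n' : Fin d → ℤ, |S n n'| ≤ Real.exp (-ρ * (zNorm (n - n') : ℝ))) →
    ∀ v : (Fin b → ℝ) → ℝ, AnalyticOnNhd ℝ v Set.univ →
      (∀ (x : Fin b → ℝ) (m : Fin b → ℤ), v (fun t => x t + (m t : ℝ)) = v x) →
      (∀ (j : Fin d) (x : Fin b → ℝ), ∃ y y' : Fin b → ℝ,
        (∀ t, β t ≠ j → y t = x t) ∧ (∀ t, β t ≠ j → y' t = x t) ∧ v y ≠ v y') →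
    ∀ C a : ℝ, 0 < C → 0 < a →
      (∀ (E' δ' : ℝ), 0 < δ' → ∀ (j : Fin d) (x : Fin b → ℝ),
        sectMeasure β {y : Fin b → ℝ | |v y - E'| < δ'} j x ≤
          ENNReal.ofReal (C * δ' ^ a)) →
    ∀ (ω : Fin b → ℝ) (E δ : ℝ), 0 < δ → ∀ N : ℕ,
      (∀ (j : Fin d) (x : Fin b → ℝ),
        sectMeasure β {y : Fin b → ℝ | ∃ n : Fin d → ℤ, zNorm n ≤ N ∧
            |v (torusProj (shift β ω n y)) - E| < δ} j x ≤
          ENNReal.ofReal (C * (2 * (N : ℝ) + 1) ^ d * δ ^ a)) ∧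
      (∀ lam : ℝ, 2 * δ⁻¹ * (2 * (N : ℝ) + 1) ^ d ≤ lam → N₀ ≤ N →
        ∀ x : Fin b → ℝ,
          ¬ (∃ n : Fin d → ℤ, zNorm n ≤ N ∧
              |v (torusProj (shift β ω n x)) - E| < δ) →
          ∀ Λ : Finset (Fin d → ℤ), IsER0 d N (↑Λ : Set (Fin d → ℤ)) →
            IsUnit (hamR β S lam v ω x E Λ) ∧
            opNorm (green β S lam v ω x E Λ) ≤ 2 * δ⁻¹ ∧
            ∀ n n' : Λ, |green β S lam v ω x E Λ n n'| ≤
              2 * δ⁻¹ * Real.exp (-ρ * (zNorm (n.1 - n'.1) : ℝ))) := by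
  refine ⟨0, fun b _ β _ S _ _ hS v hv hper _ C a _ _ hLoj ω E δ hδ N => ⟨fun j x => ?_, ?_⟩⟩
  · have hX : MeasurableSet {y : Fin b → ℝ | |v y - E| < δ} :=
      measurableSet_lt ((continuousOn_univ.1 hv.continuousOn).sub continuous_const).abs.measurable
        measurable_const
    calc _ ≤ (2 * N + 1) ^ d * ENNReal.ofReal (C * δ ^ a) :=
          sectMeasure_orbit_le β j hX (hLoj E δ hδ j) ω N x
      _ = _ := by
          rw [show C * (2 * (N : ℝ) + 1) ^ d * δ ^ a = (2 * N + 1) ^ d * (C * δ ^ a) by ring,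
            ENNReal.ofReal_mul (p := (2 * (N : ℝ) + 1) ^ d) (by positivity),
            ENNReal.ofReal_pow (by positivity)]
          norm_cast
  · intro lam hlam _ x hx Λ hΛ
    have hlam0 : 0 < lam := lt_of_lt_of_le (by positivity) hlam
    have hD : ∀ n ∈ Λ, δ ≤ |v (shift β ω n x) - E| := fun n hn => not_lt.1 fun h =>
      hx ⟨n, zNorm_le_iff_mem_box.2 (hΛ.subset_box hn), by rwa [apply_torusProj_of_periodic hper]⟩
    have hcard : Λ.card * lam⁻¹ ≤ δ / 2 := by
      have hlam' := mul_le_mul_of_nonneg_left hlam (by positivity : 0 ≤ δ / 2)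
      rw [show δ / 2 * (2 * δ⁻¹ * (2 * (N : ℝ) + 1) ^ d) = (2 * N + 1) ^ d by field_simp] at hlam'
      rw [← div_eq_mul_inv, div_le_iff₀ hlam0]
      have : (Λ.card : ℝ) ≤ (2 * N + 1) ^ d := by exact_mod_cast hΛ.card_le
      linarith
    exact green_bounds_of_diagonal_ge hρ.le hS hlam0 hδ hD hcard

/-- Theorem 4.3 / thmini: the initial scale estimate.  Away from
the trajectory hitting set `X_N`, whose sections are small, the Green's functions
of elementary regions of size `N` exist and decay, provided `λ ≥ 2δ⁻¹(2N+1)^d`. -/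
theorem initial_scale_estimate (d : ℕ) (hd : 0 < d) (ρ : ℝ) (hρ : 0 < ρ) :
    ∃ N₀ : ℕ, ∀ (b : ℕ), 0 < b →
    ∀ β : Fin b → Fin d, Function.Surjective β →
    ∀ S : (Fin d → ℤ) → (Fin d → ℤ) → ℝ,
      (∀ n n' m : Fin d → ℤ, S (n + m) (n' + m) = S n n') →
      (∀ n n' : Fin d → ℤ, S n n' = S n' n) →
      (∀ n n' : Fin d → ℤ, |S n n'| ≤ Real.exp (-ρ * (zNorm (n - n') : ℝ))) →
    ∀ v : (Fin b → ℝ) → ℝ, AnalyticOnNhd ℝ v Set.univ →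
      (∀ (x : Fin b → ℝ) (m : Fin b → ℤ), v (fun t => x t + (m t : ℝ)) = v x) →
      (∀ (j : Fin d) (x : Fin b → ℝ), ∃ y y' : Fin b → ℝ,
        (∀ t, β t ≠ j → y t = x t) ∧ (∀ t, β t ≠ j → y' t = x t) ∧ v y ≠ v y') →
    ∀ C a : ℝ, 0 < C → 0 < a →
      (∀ (E' δ' : ℝ), 0 < δ' → ∀ (j : Fin d) (x : Fin b → ℝ),
        sectMeasure β {y : Fin b → ℝ | |v y - E'| < δ'} j x ≤
          ENNReal.ofReal (C * δ' ^ a)) →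
    ∀ (ω : Fin b → ℝ) (E δ : ℝ), 0 < δ → ∀ N : ℕ,
      (∀ (j : Fin d) (x : Fin b → ℝ),
        sectMeasure β {y : Fin b → ℝ | ∃ n : Fin d → ℤ, zNorm n ≤ N ∧
            |v (torusProj (shift β ω n y)) - E| < δ} j x ≤
          ENNReal.ofReal (C * (2 * (N : ℝ) + 1) ^ d * δ ^ a)) ∧
      (∀ lam : ℝ, 2 * δ⁻¹ * (2 * (N : ℝ) + 1) ^ d ≤ lam → N₀ ≤ N →
        ∀ x : Fin b → ℝ,
          ¬ (∃ n : Fin d → ℤ, zNorm n ≤ N ∧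
              |v (torusProj (shift β ω n x)) - E| < δ) →
          ∀ Λ : Finset (Fin d → ℤ), IsER0 d N (↑Λ : Set (Fin d → ℤ)) →
            IsUnit (hamR β S lam v ω x E Λ) ∧
            opNorm (green β S lam v ω x E Λ) ≤ 2 * δ⁻¹ ∧
            ∀ n n' : Λ, |green β S lam v ω x E Λ n n'| ≤
              2 * δ⁻¹ * Real.exp (-ρ * (zNorm (n.1 - n'.1) : ℝ))) :=
  initial_scale_estimate_general d ρ hρ

end QPLoc
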